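/- Let R be a commutative ring and let 𝓜, g, β ∈ R. Let X, Y, Z be 2×2 matrices over R with det(X) = det(Y) = det(Z) = 1, X·Y·Z = T, and tr(Y) = −β. Then ψ_g(Y) = ψ_g(X)·ψ_g(Z) − S(β). -/

import Mathlib

open Matrix

/-- The lower-triangular matrix `L(u) = [[1,0],[u,1]]`. -/
def Lmat {R : Type*} [CommRing R] (u : R) : Matrix (Fin 2) (Fin 2) R :=
  !![1, 0; u, 1]

/-- The matrix obtained from `A` by swapping its two diagonal entries. -/
def swapDiag {R : Type*} [CommRing R] (A : Matrix (Fin 2) (Fin 2) R) :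
    Matrix (Fin 2) (Fin 2) R :=
  !![A 1 1, A 0 1; A 1 0, A 0 0]

/-- The map `ψ_g(A) = L(𝓜−g)·A'·L(g)`. -/
def psi {R : Type*} [CommRing R] (M g : R) (A : Matrix (Fin 2) (Fin 2) R) :
    Matrix (Fin 2) (Fin 2) R :=
  Lmat (M - g) * swapDiag A * Lmat g

/-- The matrix `S(k) = [[k, 0], [k·𝓜, k]]`. -/
def Smat {R : Type*} [CommRing R] (M k : R) : Matrix (Fin 2) (Fin 2) R :=
  !![k, 0; k * M, k]

/-- The matrix `T = [[−1, 0], [𝓜, −1]]`. -/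
def Tmat {R : Type*} [CommRing R] (M : R) : Matrix (Fin 2) (Fin 2) R :=
  !![-1, 0; M, -1]

/-!
The map `A ↦ A'` is transpose conjugated by the index reversal of `Fin 2`, hence an
anti-automorphism fixing each `L(u)`; with `L(a) L(b) = L(a + b)` this makes `ψ_g` send
`Z L(𝓜) X` to `ψ_g(X) ψ_g(Z)` and `k • 1` to `S(k)`. On the other hand `X Y Z = T` with
`det X = det Z = 1` gives `Z L(𝓜) X = -adj Y = Y - tr Y • 1`, i.e. `Y = Z L(𝓜) X - β • 1`.
-/

section

variable {R : Type*} [CommRing R]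

theorem adjugate_fin_two_eq_trace_smul_one_sub (A : Matrix (Fin 2) (Fin 2) R) :
    A.adjugate = A.trace • 1 - A := by
  ext i j
  fin_cases i <;> fin_cases j <;> simp [adjugate_fin_two, trace_fin_two]

theorem mul_adjugate_mul_mul_mul_of_det_eq_one {n : Type*} [Fintype n] [DecidableEq n]
    (X Y Z : Matrix n n R) (hX : X.det = 1) (hZ : Z.det = 1) :
    Z * (X * Y * Z).adjugate * X = Y.adjugate := by
  rw [adjugate_mul_distrib, adjugate_mul_distrib, ← mul_assoc, ← mul_assoc, mul_adjugate,
    mul_assoc, adjugate_mul, hX, hZ, one_smul, one_mul, mul_one]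

theorem Lmat_mul_Lmat (a b : R) : Lmat a * Lmat b = Lmat (a + b) := by
  ext i j
  fin_cases i <;> fin_cases j <;> simp [Lmat]

theorem Lmat_eq_neg_adjugate_Tmat (M : R) : Lmat M = -(Tmat M).adjugate := by
  simp [Lmat, Tmat, adjugate_fin_two]

theorem Smat_eq_smul_Lmat (M k : R) : Smat M k = k • Lmat M := by
  ext i j
  fin_cases i <;> fin_cases j <;> simp [Smat, Lmat, mul_comm]

theorem mul_Lmat_mul_eq_sub_trace_smul_one {M : R} {X Y Z : Matrix (Fin 2) (Fin 2) R}
    (hX : X.det = 1) (hZ : Z.det = 1) (hT : X * Y * Z = Tmat M) :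
    Z * Lmat M * X = Y - Y.trace • 1 := by
  rw [Lmat_eq_neg_adjugate_Tmat, ← hT, mul_neg, neg_mul, mul_adjugate_mul_mul_mul_of_det_eq_one X Y Z hX hZ,
    adjugate_fin_two_eq_trace_smul_one_sub, neg_sub]

theorem swapDiag_eq_transpose_submatrix_rev (A : Matrix (Fin 2) (Fin 2) R) :
    swapDiag A = (A.submatrix Fin.rev Fin.rev)ᵀ := by
  ext i j
  fin_cases i <;> fin_cases j <;> rfl

theorem swapDiag_mul (A B : Matrix (Fin 2) (Fin 2) R) :
    swapDiag (A * B) = swapDiag B * swapDiag A := by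
  simp only [swapDiag_eq_transpose_submatrix_rev, ← transpose_mul]
  exact congrArg transpose (submatrix_mul_equiv A B _ Fin.revPerm _).symm

theorem swapDiag_sub (A B : Matrix (Fin 2) (Fin 2) R) :
    swapDiag (A - B) = swapDiag A - swapDiag B := by
  ext i j
  fin_cases i <;> fin_cases j <;> rfl

theorem swapDiag_smul_one (k : R) : swapDiag (k • 1 : Matrix (Fin 2) (Fin 2) R) = k • 1 := by
  ext i j
  fin_cases i <;> fin_cases j <;> simp [swapDiag]

theorem swapDiag_Lmat (u : R) : swapDiag (Lmat u) = Lmat u := by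
  ext i j
  fin_cases i <;> fin_cases j <;> rfl

theorem psi_sub (M g : R) (A B : Matrix (Fin 2) (Fin 2) R) :
    psi M g (A - B) = psi M g A - psi M g B := by
  simp only [psi, swapDiag_sub, mul_sub, sub_mul]

theorem psi_smul_one (M g k : R) : psi M g (k • 1) = Smat M k := by
  rw [psi, swapDiag_smul_one, mul_smul_comm, mul_one, smul_mul_assoc, Lmat_mul_Lmat,
    sub_add_cancel, Smat_eq_smul_Lmat]

theorem psi_mul_Lmat_mul (M g : R) (X Z : Matrix (Fin 2) (Fin 2) R) :
    psi M g (Z * Lmat M * X) = psi M g X * psi M g Z := by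
  have hL : Lmat g * Lmat (M - g) = Lmat M := by rw [Lmat_mul_Lmat, add_sub_cancel]
  rw [psi, psi, psi, swapDiag_mul, swapDiag_mul, swapDiag_Lmat, ← hL]
  simp only [mul_assoc]

end

theorem psi_triple_general {R : Type*} [CommRing R] (M g β : R)
    (X Y Z : Matrix (Fin 2) (Fin 2) R)
    (hX : X.det = 1) (hZ : Z.det = 1)
    (hT : X * Y * Z = Tmat M) (htrY : Y.trace = -β) :
    psi M g Y = psi M g X * psi M g Z - Smat M β := by
  have hY : Y = Z * Lmat M * X - β • 1 := by
    rw [mul_Lmat_mul_eq_sub_trace_smul_one hX hZ hT, htrY, neg_smul, sub_neg_eq_add,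
      add_sub_cancel_right]
  rw [hY, psi_sub, psi_mul_Lmat_mul, psi_smul_one]

/-- `ψ_g` carries a cluster Markov-monodromy triple (`X·Y·Z = T`) to a cluster
generalized Cohn triple (`ψ_g(Y) = ψ_g(X)·ψ_g(Z) − S(β)`). -/
theorem psi_triple {R : Type*} [CommRing R] (M g β : R)
    (X Y Z : Matrix (Fin 2) (Fin 2) R)
    (hX : X.det = 1) (hY : Y.det = 1) (hZ : Z.det = 1)
    (hT : X * Y * Z = Tmat M) (htrY : Y.trace = -β) :
    psi M g Y = psi M g X * psi M g Z - Smat M β :=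
  psi_triple_general M g β X Y Z hX hZ hT htrY
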